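/- arXiv:1711.04721 — 9 statements merged into one kernel-verified Lean document; each statement's English description precedes it below -/
import Mathlib

section
/- Let K be a compact convex subset of a locally convex Hausdorff real topological vector space, and let f : K → ℝ ∪ {∞} be lower semicontinuous and concave. Then the infimum of f over K equals the minimum of f over the set of extreme points of K; in particular f attains its infimum at an extreme point of K. -/
/-! A lower semicontinuous function attains its minimum `f z` on the compact set `K`, and the
minimizing set `K ∩ f ⁻¹' Iic (f z)` is compact. Concavity makes it a face of `K`: if an interior
point of a segment in `K` takes the minimal value, so do both endpoints. By the Krein–Milman lemma
the minimizing set has an extreme point, and extreme points of a face of `K` are extreme in `K`. -/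

open Set

lemma EReal.le_of_mul_add_mul_le {a : ℝ} (ha₀ : 0 < a) (ha₁ : a < 1) {m u v : EReal}
    (hm : m ≠ ⊥) (hv : m ≤ v) (h : a * u + ((1 - a : ℝ) : EReal) * v ≤ m) : u ≤ m := by
  induction m using EReal.rec with
  | bot => exact absurd rfl hm
  | top => exact le_top
  | coe μ =>
    have hsum : (a : EReal) * u + ((1 - a) * μ : ℝ) ≤ ((a * μ : ℝ) : EReal) + ((1 - a) * μ : ℝ) :=
      calc (a : EReal) * u + ((1 - a) * μ : ℝ)
          ≤ a * u + ((1 - a : ℝ) : EReal) * v := by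
            rw [EReal.coe_mul]; gcongr
        _ ≤ μ := h
        _ = ((a * μ : ℝ) : EReal) + ((1 - a) * μ : ℝ) := by norm_cast; ring
    have hau : u * a ≤ ((a * μ : ℝ) : EReal) :=
      mul_comm u a ▸ (EReal.addLECancellable_coe _).add_le_add_iff_right.mp hsum
    rwa [← EReal.le_div_iff_mul_le (by exact_mod_cast ha₀) (EReal.coe_ne_top a), ← EReal.coe_div,
      mul_div_cancel_left₀ μ ha₀.ne'] at hau

lemma isExtreme_inter_preimage_Iic_of_isMinOn {E : Type*} [AddCommGroup E] [Module ℝ E] {K : Set E}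
    {f : E → EReal}
    (hconc : ∀ x ∈ K, ∀ y ∈ K, ∀ t : ℝ, 0 ≤ t → t ≤ 1 →
      (t : EReal) * f x + ((1 - t : ℝ) : EReal) * f y ≤ f (t • x + (1 - t) • y))
    {z : E} (hz : IsMinOn f K z) (hbot : f z ≠ ⊥) :
    IsExtreme ℝ K (K ∩ f ⁻¹' Iic (f z)) := by
  refine ⟨inter_subset_left, ?_⟩
  rintro x₁ hx₁ x₂ hx₂ x ⟨-, hxz⟩ ⟨a, b, ha, hb, hab, rfl⟩
  obtain rfl : b = 1 - a := by linarith
  refine ⟨hx₁, EReal.le_of_mul_add_mul_le ha (by linarith) hbot (hz hx₂) ?_⟩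
  exact (hconc x₁ hx₁ x₂ hx₂ a ha.le (by linarith)).trans hxz

theorem bauer_minimum_principle_general {E : Type*} [AddCommGroup E] [Module ℝ E]
    [TopologicalSpace E] [IsTopologicalAddGroup E] [ContinuousSMul ℝ E]
    [T2Space E] [LocallyConvexSpace ℝ E]
    (K : Set E) (hKne : K.Nonempty) (hKcpt : IsCompact K)
    (f : E → EReal) (hfbot : ∀ x ∈ K, f x ≠ ⊥)
    (hlsc : LowerSemicontinuousOn f K)
    (hconc : ∀ x ∈ K, ∀ y ∈ K, ∀ t : ℝ, 0 ≤ t → t ≤ 1 →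
      (t : EReal) * f x + ((1 - t : ℝ) : EReal) * f y ≤ f (t • x + (1 - t) • y)) :
    ∃ x ∈ Set.extremePoints ℝ K, (∀ y ∈ K, f x ≤ f y) ∧ f x = ⨅ y ∈ K, f y := by
  obtain ⟨z, hzK, hz⟩ := hlsc.exists_isMinOn hKne hKcpt
  have hface := isExtreme_inter_preimage_Iic_of_isMinOn hconc hz (hfbot z hzK)
  obtain ⟨x, hx⟩ := (hlsc.isCompact_inter_preimage_Iic hKcpt (f z)).extremePoints_nonempty
    ⟨z, hzK, le_refl (f z)⟩
  have hxK : x ∈ K.extremePoints ℝ := hface.extremePoints_subset_extremePoints hx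
  have hxmin : ∀ y ∈ K, f x ≤ f y := fun y hy => hx.1.2.trans (hz hy)
  exact ⟨x, hxK, hxmin, le_antisymm (le_iInf₂ hxmin) (iInf₂_le x hxK.1)⟩

/-- Bauer's minimum principle: a lower semicontinuous concave
function (with values in `(-∞, ∞]`, modeled inside `EReal`) on a nonempty
compact convex subset of a locally convex Hausdorff real topological vector
space attains its infimum over `K` at an extreme point of `K`. -/
theorem bauer_minimum_principle {E : Type*} [AddCommGroup E] [Module ℝ E]
    [TopologicalSpace E] [IsTopologicalAddGroup E] [ContinuousSMul ℝ E]
    [T2Space E] [LocallyConvexSpace ℝ E]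
    (K : Set E) (hKne : K.Nonempty) (hKcpt : IsCompact K) (hKcvx : Convex ℝ K)
    (f : E → EReal) (hfbot : ∀ x ∈ K, f x ≠ ⊥)
    (hlsc : LowerSemicontinuousOn f K)
    (hconc : ∀ x ∈ K, ∀ y ∈ K, ∀ t : ℝ, 0 ≤ t → t ≤ 1 →
      (t : EReal) * f x + ((1 - t : ℝ) : EReal) * f y ≤ f (t • x + (1 - t) • y)) :
    ∃ x ∈ Set.extremePoints ℝ K, (∀ y ∈ K, f x ≤ f y) ∧ f x = ⨅ y ∈ K, f y :=
  bauer_minimum_principle_general K hKne hKcpt f hfbot hlsc hconc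
end

section
/- Let K be a compact convex subset of a locally convex Hausdorff real topological vector space, and let f, g : K → (-∞, ∞] be lower semicontinuous affine functions. If f(λ) ≤ g(λ) for every extreme point λ of K, then f ≤ g on all of K. -/
/-!
Suppose `g x₀ < r < f x₀`. Separating `(x₀, r)` from the closed convex epigraph of `f` gives a
continuous affine `a ≤ f` on `K` with `r < a x₀`. Then `a ≤ f ≤ g` at the extreme points, and
Bauer's minimum principle for the lower semicontinuous concave function `g - a` (its minimum over
`K` is attained at an extreme point) yields `a ≤ g` on all of `K`, contradicting `g x₀ < r < a x₀`.
-/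

theorem EReal.sub_coe_add_sub_coe (A B : EReal) (r s : ℝ) :
    A - r + (B - s) = A + B - ((r + s : ℝ) : EReal) := by
  simp only [sub_eq_add_neg]
  rw [← EReal.coe_neg, ← EReal.coe_neg, ← EReal.coe_neg, _root_.neg_add, EReal.coe_add]
  abel

theorem EReal.le_of_mul_add_mul_le_s3 {a b : ℝ} (ha : 0 < a) (hb : 0 < b) (hab : a + b = 1)
    {m u v : EReal} (hm : m ≠ ⊥) (hmu : m ≤ u) (hmv : m ≤ v)
    (h : (a : EReal) * u + (b : EReal) * v ≤ m) : u ≤ m := by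
  induction m using EReal.rec with
  | bot => exact absurd rfl hm
  | top => exact le_top
  | coe m =>
    induction u using EReal.rec with
    | bot => simp at hmu
    | top =>
      have hv : (b : EReal) * v ≠ ⊥ := by
        induction v using EReal.rec <;> simp_all [EReal.coe_mul_top_of_pos hb, ← EReal.coe_mul]
      simp [EReal.coe_mul_top_of_pos ha, EReal.top_add_of_ne_bot hv] at h
    | coe u =>
      induction v using EReal.rec with
      | bot => simp at hmv
      | top => simp [EReal.coe_mul_top_of_pos hb, ← EReal.coe_mul] at h
      | coe v =>
        norm_cast at *
        by_contra! hum
        have hm : a * m + b * m = m := by rw [← add_mul, hab, one_mul]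
        linarith [mul_lt_mul_of_pos_left hum ha, mul_le_mul_of_nonneg_left hmv hb.le]

theorem LowerSemicontinuousOn.isClosed_realEpigraph {α : Type*} [TopologicalSpace α]
    {K : Set α} {f : α → EReal} (hK : IsClosed K) (hf : LowerSemicontinuousOn f K) :
    IsClosed {p : α × ℝ | p.1 ∈ K ∧ f p.1 ≤ p.2} :=
  ((lowerSemicontinuousOn_iff_isClosed_epigraph hK).1 hf).preimage
    (continuous_fst.prodMk (continuous_coe_real_ereal.comp continuous_snd))

theorem LowerSemicontinuousOn.sub_continuous {α : Type*} [TopologicalSpace α] {K : Set α}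
    {f : α → EReal} {a : α → ℝ} (hf : LowerSemicontinuousOn f K) (ha : Continuous a) :
    LowerSemicontinuousOn (fun x => f x - a x) K := by
  simp only [sub_eq_add_neg]
  have hneg : Continuous fun x => -((a x : ℝ) : EReal) :=
    continuous_neg.comp (continuous_coe_real_ereal.comp ha)
  refine hf.add' (hneg.lowerSemicontinuous.lowerSemicontinuousOn K)
    fun x _ => EReal.continuousAt_add ?_ ?_
  · exact Or.inr (by simp)
  · exact Or.inr (by simp)

theorem LowerSemicontinuousOn.exists_forall_coe_le {α : Type*} [TopologicalSpace α] {K : Set α}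
    (hK : IsCompact K) {f : α → EReal} (hf : LowerSemicontinuousOn f K)
    (hbot : ∀ x ∈ K, f x ≠ ⊥) : ∃ m : ℝ, ∀ x ∈ K, (m : EReal) ≤ f x := by
  rcases K.eq_empty_or_nonempty with rfl | hne
  · exact ⟨0, by simp⟩
  obtain ⟨w, hw, hmin⟩ := hf.exists_isMinOn hne hK
  obtain ⟨m, -, hm⟩ := EReal.exists_between_coe_real (bot_lt_iff_ne_bot.2 (hbot w hw))
  exact ⟨m, fun x hx => hm.le.trans (hmin hx)⟩

section

variable {E : Type*} [AddCommGroup E] [Module ℝ E]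

/- Mathlib's `ConvexOn` needs an `ℝ`-module as codomain, which `EReal` is not. -/
def ERealConvexOn (K : Set E) (f : E → EReal) : Prop :=
  ∀ x ∈ K, ∀ y ∈ K, ∀ t : ℝ, 0 ≤ t → t ≤ 1 →
    f (t • x + (1 - t) • y) ≤ (t : EReal) * f x + ((1 - t : ℝ) : EReal) * f y

def ERealConcaveOn (K : Set E) (f : E → EReal) : Prop :=
  ∀ x ∈ K, ∀ y ∈ K, ∀ t : ℝ, 0 ≤ t → t ≤ 1 →
    (t : EReal) * f x + ((1 - t : ℝ) : EReal) * f y ≤ f (t • x + (1 - t) • y)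

theorem ERealConvexOn.convex_epigraph {K : Set E} {f : E → EReal} (hK : Convex ℝ K)
    (hf : ERealConvexOn K f) : Convex ℝ {p : E × ℝ | p.1 ∈ K ∧ f p.1 ≤ p.2} := by
  rintro ⟨x, s⟩ ⟨hx, hxs⟩ ⟨y, t⟩ ⟨hy, hyt⟩ a b ha hb hab
  obtain rfl : b = 1 - a := by linarith
  refine ⟨hK hx hy ha hb hab, ?_⟩
  calc f (a • x + (1 - a) • y)
      ≤ (a : EReal) * f x + ((1 - a : ℝ) : EReal) * f y := hf x hx y hy a ha (by linarith)
    _ ≤ (a : EReal) * s + ((1 - a : ℝ) : EReal) * t := by gcongr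
    _ = ((a • (x, s) + (1 - a) • (y, t) : E × ℝ).2 : EReal) := by simp

theorem ERealConcaveOn.sub_affine {K : Set E} {g : E → EReal} (hg : ERealConcaveOn K g)
    (φ : E →ₗ[ℝ] ℝ) (c : ℝ) : ERealConcaveOn K (fun x => g x - ((φ x + c : ℝ) : EReal)) := by
  intro x hx y hy t ht0 ht1
  have hφ : φ (t • x + (1 - t) • y) + c = t * (φ x + c) + (1 - t) * (φ y + c) := by
    simp only [map_add, map_smul, smul_eq_mul]; ring
  dsimp only
  rw [hφ, EReal.mul_sub_of_nonneg_of_ne_top (by exact_mod_cast ht0) (EReal.coe_ne_top _),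
    EReal.mul_sub_of_nonneg_of_ne_top (by exact_mod_cast sub_nonneg.2 ht1) (EReal.coe_ne_top _),
    ← EReal.coe_mul, ← EReal.coe_mul, EReal.sub_coe_add_sub_coe]
  exact EReal.sub_le_sub (hg x hx y hy t ht0 ht1) le_rfl

end

theorem exists_affine_minorant_of_separation {E : Type*} [AddCommGroup E] [Module ℝ E]
    [TopologicalSpace E] {K : Set E} {f : E → EReal} (L : E →L[ℝ] ℝ) {s u : ℝ} (hs : 0 < s)
    (hsep : ∀ x ∈ K, ∀ t : ℝ, f x ≤ t → u < L x + t * s) {x₀ : E} {r : ℝ}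
    (hx₀ : L x₀ + r * s < u) :
    ∃ (φ : E →L[ℝ] ℝ) (c : ℝ), (∀ x ∈ K, ((φ x + c : ℝ) : EReal) ≤ f x) ∧ r < φ x₀ + c := by
  have hval : ∀ x, (-s⁻¹ • L) x + u / s = (u - L x) / s := by
    intro x
    simp only [FunLike.coe_smul, Pi.smul_apply, smul_eq_mul]
    field_simp
    ring
  refine ⟨-s⁻¹ • L, u / s, fun x hx => ?_, ?_⟩
  · refine EReal.le_of_forall_lt_iff_le.1 fun t ht => ?_
    rw [hval, EReal.coe_le_coe_iff, div_le_iff₀ hs]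
    linarith [hsep x hx t ht.le]
  · rw [hval, lt_div_iff₀ hs]
    linarith

section

variable {E : Type*} [AddCommGroup E] [Module ℝ E] [TopologicalSpace E]
  [IsTopologicalAddGroup E] [ContinuousSMul ℝ E] [LocallyConvexSpace ℝ E]

theorem exists_continuous_affine_minorant {K : Set E} (hKcl : IsClosed K) (hKcvx : Convex ℝ K)
    {f : E → EReal} (hflsc : LowerSemicontinuousOn f K) (hfcvx : ERealConvexOn K f)
    {m : ℝ} (hm : ∀ x ∈ K, (m : EReal) ≤ f x) {x₀ : E} {r : ℝ}
    (hr : (r : EReal) < f x₀) :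
    ∃ (φ : E →L[ℝ] ℝ) (c : ℝ), (∀ x ∈ K, ((φ x + c : ℝ) : EReal) ≤ f x) ∧ r < φ x₀ + c := by
  by_cases hdom : ∀ x ∈ K, f x = ⊤
  · exact ⟨0, r + 1, fun x hx => by simp [hdom x hx], by simp⟩
  push Not at hdom
  obtain ⟨x₁, hx₁, hfx₁⟩ := hdom
  obtain ⟨ℓ, u, hℓx₀, hℓC⟩ := geometric_hahn_banach_point_closed
    (hfcvx.convex_epigraph hKcvx) (hflsc.isClosed_realEpigraph hKcl)
    (x := (x₀, r)) fun h => h.2.not_gt hr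
  set L : E →L[ℝ] ℝ := ℓ.comp (ContinuousLinearMap.inl ℝ E ℝ)
  set s := ℓ (0, 1)
  have hℓ : ∀ x t, ℓ (x, t) = L x + t * s := by
    intro x t
    have : ((x, t) : E × ℝ) = (x, 0) + t • (0, 1) := by ext <;> simp
    rw [this, map_add, map_smul, smul_eq_mul]
    rfl
  have hsep : ∀ x ∈ K, ∀ t : ℝ, f x ≤ t → u < L x + t * s := fun x hx t ht =>
    hℓ x t ▸ hℓC (x, t) ⟨hx, ht⟩
  -- the epigraph contains a vertical ray over `x₁`, so `ℓ` cannot decrease upwards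
  have hs : 0 ≤ s := by
    by_contra! hs
    set T := max (f x₁).toReal ((u - L x₁) / s)
    have h₁ := hsep x₁ hx₁ T ((EReal.le_coe_toReal hfx₁).trans (by simp [T]))
    have h₂ := (div_le_iff_of_neg hs).1 (le_max_right (f x₁).toReal ((u - L x₁) / s))
    linarith
  -- tilting `ℓ` slightly upwards keeps the separation, since the epigraph lies above height `m`
  obtain ⟨ε, hε, hεr⟩ := exists_pos_mul_lt (sub_pos.2 (hℓ x₀ r ▸ hℓx₀)) (r - m)
  set s' := s + ε
  set u' := u + ε * m
  have hs' : 0 < s' := by positivity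
  have hsep' : ∀ x ∈ K, ∀ t : ℝ, f x ≤ t → u' < L x + t * s' := by
    intro x hx t ht
    have hmt : m ≤ t := by exact_mod_cast (hm x hx).trans ht
    nlinarith [hsep x hx t ht]
  exact exists_affine_minorant_of_separation L hs' hsep' (by nlinarith)

theorem IsCompact.exists_mem_extremePoints_isMinOn [T2Space E] {K : Set E} (hK : IsCompact K)
    (hne : K.Nonempty) {h : E → EReal} (hlsc : LowerSemicontinuousOn h K)
    (hcc : ERealConcaveOn K h) (hbot : ∀ x ∈ K, h x ≠ ⊥) :
    ∃ z ∈ K.extremePoints ℝ, IsMinOn h K z := by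
  obtain ⟨w, hw, hmin⟩ := hlsc.exists_isMinOn hne hK
  set M := {x ∈ K | h x ≤ h w}
  have hMcpt : IsCompact M := hK.of_isClosed_subset
    (((lowerSemicontinuousOn_iff_isClosed_epigraph hK.isClosed).1 hlsc).preimage
      (continuous_id.prodMk continuous_const)) (Set.sep_subset _ _)
  -- a minimiser cannot be a proper convex combination of points with a strictly larger value
  have hMext : IsExtreme ℝ K M := by
    refine ⟨Set.sep_subset _ _, fun x₁ hx₁ x₂ hx₂ z hz ⟨a, b, ha, hb, hab, hzab⟩ => ⟨hx₁, ?_⟩⟩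
    obtain rfl : b = 1 - a := by linarith
    subst hzab
    exact EReal.le_of_mul_add_mul_le_s3 ha hb hab (hbot w hw) (hmin hx₁) (hmin hx₂)
      ((hcc x₁ hx₁ x₂ hx₂ a ha.le (by linarith)).trans hz.2)
  obtain ⟨z, hz⟩ := hMcpt.extremePoints_nonempty ⟨w, hw, le_rfl⟩
  exact ⟨z, hMext.extremePoints_subset_extremePoints hz,
    fun y hy => (extremePoints_subset hz).2.trans (hmin hy)⟩

theorem coe_le_of_le_on_extremePoints [T2Space E] {K : Set E} (hK : IsCompact K)
    {g : E → EReal} (hglsc : LowerSemicontinuousOn g K) (hgcc : ERealConcaveOn K g)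
    (hgbot : ∀ x ∈ K, g x ≠ ⊥) (φ : E →L[ℝ] ℝ) (c : ℝ)
    (hle : ∀ x ∈ K.extremePoints ℝ, ((φ x + c : ℝ) : EReal) ≤ g x) :
    ∀ x ∈ K, ((φ x + c : ℝ) : EReal) ≤ g x := by
  intro x hx
  obtain ⟨z, hz, hmin⟩ := hK.exists_mem_extremePoints_isMinOn ⟨x, hx⟩
    (hglsc.sub_continuous (φ.continuous.add continuous_const))
    (hgcc.sub_affine φ.toLinearMap c)
    fun y hy => by
      rw [sub_eq_add_neg, ← EReal.coe_neg]
      exact EReal.add_ne_bot_iff.2 ⟨hgbot y hy, EReal.coe_ne_bot _⟩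
  have hz0 : (0 : EReal) ≤ g z - ((φ z + c : ℝ) : EReal) :=
    EReal.sub_nonneg (Or.inr (EReal.coe_ne_top _)) (Or.inr (EReal.coe_ne_bot _)) |>.2 (hle z hz)
  exact (EReal.sub_nonneg (Or.inr (EReal.coe_ne_top _)) (Or.inr (EReal.coe_ne_bot _))).1
    (hz0.trans (hmin hx))

end

/-- If two lower semicontinuous affine functions
`f, g : K → (-∞, ∞]` on a compact convex set satisfy `f ≤ g` on the extreme
points of `K`, then `f ≤ g` on all of `K`. -/
theorem laff_le_of_le_on_extremePoints {E : Type*} [AddCommGroup E] [Module ℝ E]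
    [TopologicalSpace E] [IsTopologicalAddGroup E] [ContinuousSMul ℝ E]
    [T2Space E] [LocallyConvexSpace ℝ E]
    (K : Set E) (hKcpt : IsCompact K) (hKcvx : Convex ℝ K)
    (f g : E → EReal)
    (hfbot : ∀ x ∈ K, f x ≠ ⊥) (hgbot : ∀ x ∈ K, g x ≠ ⊥)
    (hflsc : LowerSemicontinuousOn f K) (hglsc : LowerSemicontinuousOn g K)
    (hfaff : ∀ x ∈ K, ∀ y ∈ K, ∀ t : ℝ, 0 ≤ t → t ≤ 1 →
      f (t • x + (1 - t) • y) = (t : EReal) * f x + ((1 - t : ℝ) : EReal) * f y)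
    (hgaff : ∀ x ∈ K, ∀ y ∈ K, ∀ t : ℝ, 0 ≤ t → t ≤ 1 →
      g (t • x + (1 - t) • y) = (t : EReal) * g x + ((1 - t : ℝ) : EReal) * g y)
    (hle : ∀ x ∈ Set.extremePoints ℝ K, f x ≤ g x) :
    ∀ x ∈ K, f x ≤ g x := by
  intro x₀ hx₀
  by_contra! hlt
  obtain ⟨r, hgr, hrf⟩ := EReal.exists_between_coe_real hlt
  obtain ⟨m, hm⟩ := hflsc.exists_forall_coe_le hKcpt hfbot
  obtain ⟨φ, c, hφf, hrφ⟩ := exists_continuous_affine_minorant hKcpt.isClosed hKcvx hflsc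
    (fun x hx y hy t ht0 ht1 => (hfaff x hx y hy t ht0 ht1).le) hm hrf
  have hφg := coe_le_of_le_on_extremePoints hKcpt hglsc
    (fun x hx y hy t ht0 ht1 => (hgaff x hx y hy t ht0 ht1).ge) hgbot φ c
    fun x hx => (hφf x (extremePoints_subset hx)).trans (hle x hx)
  exact (hgr.trans (EReal.coe_lt_coe_iff.2 hrφ)).not_ge (hφg x₀ hx₀)
end

section
/- Let K be a compact convex subset of a locally convex Hausdorff real topological vector space. Every lower semicontinuous affine function f : K → (-∞, ∞] is the pointwise supremum of an upward directed family of continuous affine real-valued functions on K. -/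
/-!
The family is that of all continuous affine `h` with `h < f` on `K`. Both directedness and the
supremum formula come from strict separation in `E × ℝ`: a compact convex set `D` lying strictly
below the graph of `f` is disjoint from the closed convex epigraph of `f`, and a separating
hyperplane that is not vertical is the graph of a continuous affine minorant of `f` lying above
`D`. For a point `(x₀, r)` below `f x₀` take `D` a segment from it to a point below a finite value
of `f`; for two minorants take `D` the convex join of their graphs over `K`. Affinity of `f` makes
the strict hypograph convex, so `D` stays below `f`. If `f ≡ ⊤` on `K`, constants suffice.
-/

open Set

theorem isCompact_convexJoin {F : Type*} [AddCommGroup F] [Module ℝ F] [TopologicalSpace F]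
    [ContinuousAdd F] [ContinuousSMul ℝ F] {s t : Set F} (hs : IsCompact s) (ht : IsCompact t) :
    IsCompact (convexJoin ℝ s t) := by
  have : convexJoin ℝ s t = (fun p : (F × F) × ℝ => (1 - p.2) • p.1.1 + p.2 • p.1.2) ''
      ((s ×ˢ t) ×ˢ Icc 0 1) := by
    ext z
    simp [mem_convexJoin, segment_eq_image, and_assoc]
  rw [this]
  exact ((hs.prod ht).prod isCompact_Icc).image (by fun_prop)

section

variable {E : Type*}

def epigraphOn (K : Set E) (f : E → EReal) : Set (E × ℝ) :=
  {p | p.1 ∈ K ∧ f p.1 ≤ p.2}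

def strictHypographOn (K : Set E) (f : E → EReal) : Set (E × ℝ) :=
  {p | p.1 ∈ K ∧ (p.2 : EReal) < f p.1}

theorem isClosed_epigraphOn [TopologicalSpace E] {K : Set E} {f : E → EReal} (hK : IsClosed K)
    (hf : LowerSemicontinuousOn f K) : IsClosed (epigraphOn K f) :=
  ((lowerSemicontinuousOn_iff_isClosed_epigraph hK).1 hf).preimage
    (continuous_id.prodMap continuous_coe_real_ereal)

end

section

variable {E : Type*} [AddCommGroup E] [Module ℝ E]

def AffineOn (K : Set E) (f : E → EReal) : Prop :=
  ∀ x ∈ K, ∀ y ∈ K, ∀ t : ℝ, 0 ≤ t → t ≤ 1 →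
    f (t • x + (1 - t) • y) = (t : EReal) * f x + ((1 - t : ℝ) : EReal) * f y

variable {K : Set E} {f : E → EReal}

theorem convex_epigraphOn (hK : Convex ℝ K) (hf : AffineOn K f) :
    Convex ℝ (epigraphOn K f) := by
  rintro ⟨x, s⟩ ⟨hx, hxs⟩ ⟨y, s'⟩ ⟨hy, hys⟩ a b ha hb hab
  obtain rfl : b = 1 - a := by linarith
  refine ⟨hK hx hy ha hb hab, ?_⟩
  simp only [Prod.smul_mk, Prod.mk_add_mk, smul_eq_mul]
  rw [hf x hx y hy a ha (by linarith), EReal.coe_add, EReal.coe_mul, EReal.coe_mul]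
  gcongr

theorem convex_strictHypographOn (hK : Convex ℝ K) (hf : AffineOn K f) :
    Convex ℝ (strictHypographOn K f) := by
  rintro ⟨x, s⟩ ⟨hx, hxs⟩ ⟨y, s'⟩ ⟨hy, hys⟩ a b ha hb hab
  obtain rfl : b = 1 - a := by linarith
  refine ⟨hK hx hy ha hb hab, ?_⟩
  obtain ⟨r, hsr, hr⟩ := EReal.exists_between_coe_real hxs
  obtain ⟨r', hsr', hr'⟩ := EReal.exists_between_coe_real hys
  simp only [EReal.coe_lt_coe_iff] at hsr hsr'
  simp only [Prod.smul_mk, Prod.mk_add_mk, smul_eq_mul]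
  rw [hf x hx y hy a ha (by linarith)]
  calc ((a * s + (1 - a) * s' : ℝ) : EReal) < ((a * r + (1 - a) * r' : ℝ) : EReal) :=
        EReal.coe_lt_coe_iff.2 <| by
          nlinarith [mul_pos (sub_pos.2 hsr) (sub_pos.2 hsr'), mul_nonneg ha (sub_pos.2 hsr).le,
            mul_nonneg hb (sub_pos.2 hsr').le]
    _ = a * r + ((1 - a : ℝ) : EReal) * r' := by push_cast; rfl
    _ ≤ a * f x + ((1 - a : ℝ) : EReal) * f y := by gcongr

end

section

variable {E : Type*} [AddCommGroup E] [Module ℝ E] [TopologicalSpace E]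

def strictAffineMinorants (K : Set E) (f : E → EReal) : Set (E → ℝ) :=
  {h | (∃ (g : E →L[ℝ] ℝ) (c : ℝ), h = fun x => g x + c) ∧ ∀ x ∈ K, (h x : EReal) < f x}

theorem convex_graph_image {K : Set E} (hK : Convex ℝ K) (g : E →L[ℝ] ℝ) (c : ℝ) :
    Convex ℝ ((fun x => (x, g x + c)) '' K) := by
  rintro _ ⟨x, hx, rfl⟩ _ ⟨y, hy, rfl⟩ a b ha hb hab
  refine ⟨a • x + b • y, hK hx hy ha hb hab, ?_⟩
  ext
  · rfl
  · simp only [map_add, map_smul, smul_eq_mul, Prod.snd_add, Prod.smul_snd]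
    linear_combination (-c) * hab

theorem continuous_and_affine_of_mem_strictAffineMinorants {K : Set E} {f : E → EReal} {h : E → ℝ}
    (hh : h ∈ strictAffineMinorants K f) :
    Continuous h ∧ ∀ x y : E, ∀ t : ℝ, h (t • x + (1 - t) • y) = t * h x + (1 - t) * h y := by
  obtain ⟨⟨g, c, rfl⟩, -⟩ := hh
  refine ⟨by fun_prop, fun x y t => ?_⟩
  simp only [map_add, map_smul, smul_eq_mul]
  ring

variable [IsTopologicalAddGroup E] [ContinuousSMul ℝ E] [LocallyConvexSpace ℝ E]
  {K : Set E} {f : E → EReal}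

theorem exists_affine_minorant_above (hK : IsClosed K) (hKcvx : Convex ℝ K)
    (hflsc : LowerSemicontinuousOn f K) (hfaff : AffineOn K f) {D : Set (E × ℝ)}
    (hDc : IsCompact D) (hDcvx : Convex ℝ D) (hDH : D ⊆ strictHypographOn K f)
    {p : E × ℝ} (hp : p ∈ D) (hpf : f p.1 ≠ ⊤) :
    ∃ (g : E →L[ℝ] ℝ) (c : ℝ),
      (∀ x ∈ K, ((g x + c : ℝ) : EReal) < f x) ∧ ∀ q ∈ D, q.2 < g q.1 + c := by
  obtain ⟨ℓ, u, v, hℓD, huv, hℓC⟩ := geometric_hahn_banach_compact_closed hDcvx hDc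
    (convex_epigraphOn hKcvx hfaff) (isClosed_epigraphOn hK hflsc)
    (disjoint_left.2 fun q hqD hqC => (hDH hqD).2.not_ge hqC.2)
  -- The hyperplane `ℓ = v` is the graph of the wanted function; it is not vertical (`0 < c`)
  -- because `D` has a point strictly below the finite value `f p.1`.
  set c := ℓ (0, 1)
  have hℓ : ∀ x t, ℓ (x, t) = ℓ (x, 0) + t * c := fun x t => by
    rw [← smul_eq_mul, ← map_smul, ← map_add, Prod.smul_mk, smul_zero, smul_eq_mul, mul_one,
      Prod.mk_add_mk, add_zero, zero_add]
  have hc : 0 < c := by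
    obtain ⟨hpK, hpt⟩ := hDH hp
    lift f p.1 to ℝ using ⟨hpf, hpt.ne_bot⟩ with t ht
    have h₁ := hℓD p hp
    have h₂ := hℓC (p.1, t) ⟨hpK, ht.ge⟩
    rw [← Prod.mk.eta (p := p), hℓ] at h₁
    rw [hℓ] at h₂
    have : p.2 < t := EReal.coe_lt_coe_iff.1 (ht ▸ hpt)
    nlinarith
  have hval : ∀ x, (-c⁻¹ • ℓ.comp (.inl ℝ E ℝ)) x + v / c = (v - ℓ (x, 0)) / c := fun x => by
    simp only [FunLike.coe_smul, Pi.smul_apply, ContinuousLinearMap.comp_apply,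
      ContinuousLinearMap.inl_apply, smul_eq_mul]
    field_simp
    ring
  refine ⟨-c⁻¹ • ℓ.comp (.inl ℝ E ℝ), v / c, fun x hx => ?_, fun q hq => ?_⟩
  · by_contra hle
    have := hℓC (x, _) ⟨hx, not_lt.1 hle⟩
    rw [hℓ, hval, div_mul_cancel₀ _ hc.ne'] at this
    linarith
  · have := hℓD q hq
    rw [← Prod.mk.eta (p := q), hℓ] at this
    rw [hval, lt_div_iff₀ hc]
    linarith

theorem exists_affine_minorant_above_union (hK : IsClosed K) (hKcvx : Convex ℝ K)
    (hflsc : LowerSemicontinuousOn f K) (hfaff : AffineOn K f) {D₁ D₂ : Set (E × ℝ)}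
    (hD₁c : IsCompact D₁) (hD₁cvx : Convex ℝ D₁) (hD₁H : D₁ ⊆ strictHypographOn K f)
    (hD₁ : D₁.Nonempty) (hD₂c : IsCompact D₂) (hD₂cvx : Convex ℝ D₂)
    (hD₂H : D₂ ⊆ strictHypographOn K f) {p : E × ℝ} (hp : p ∈ D₂) (hpf : f p.1 ≠ ⊤) :
    ∃ (g : E →L[ℝ] ℝ) (c : ℝ),
      (∀ x ∈ K, ((g x + c : ℝ) : EReal) < f x) ∧ ∀ q ∈ D₁ ∪ D₂, q.2 < g q.1 + c := by
  obtain ⟨g, c, hgf, hgD⟩ := exists_affine_minorant_above hK hKcvx hflsc hfaff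
    (isCompact_convexJoin hD₁c hD₂c) (hD₁cvx.convexJoin hD₂cvx)
    (convexJoin_subset hD₁H hD₂H (convex_strictHypographOn hKcvx hfaff))
    (subset_convexJoin_right hD₁ hp) hpf
  exact ⟨g, c, hgf, fun q hq =>
    hgD q (hq.elim (subset_convexJoin_left ⟨p, hp⟩ ·) (subset_convexJoin_right hD₁ ·))⟩

theorem exists_mem_strictAffineMinorants_gt (hK : IsClosed K) (hKcvx : Convex ℝ K)
    (hfbot : ∀ x ∈ K, f x ≠ ⊥) (hflsc : LowerSemicontinuousOn f K) (hfaff : AffineOn K f)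
    {x₀ : E} (hx₀ : x₀ ∈ K) {r : ℝ} (hr : (r : EReal) < f x₀) :
    ∃ h ∈ strictAffineMinorants K f, r < h x₀ := by
  by_cases hdom : ∃ x₁ ∈ K, f x₁ ≠ ⊤
  · obtain ⟨x₁, hx₁, hfx₁⟩ := hdom
    obtain ⟨t₁, -, ht₁⟩ := EReal.exists_between_coe_real (bot_lt_iff_ne_bot.2 (hfbot x₁ hx₁))
    obtain ⟨g, c, hgf, hgD⟩ := exists_affine_minorant_above_union hK hKcvx hflsc hfaff
      (D₁ := {(x₀, r)}) (D₂ := {(x₁, t₁)})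
      isCompact_singleton (convex_singleton _) (singleton_subset_iff.2 ⟨hx₀, hr⟩)
      (singleton_nonempty _)
      isCompact_singleton (convex_singleton _) (singleton_subset_iff.2 ⟨hx₁, ht₁⟩)
      (mem_singleton (x₁, t₁)) hfx₁
    exact ⟨_, ⟨⟨g, c, rfl⟩, hgf⟩, hgD _ (Or.inl rfl)⟩
  · push Not at hdom
    exact ⟨fun _ => r + 1, ⟨⟨0, r + 1, by simp⟩, fun x hx => hdom x hx ▸ EReal.coe_lt_top _⟩,
      by simp⟩

theorem eq_iSup_strictAffineMinorants (hK : IsClosed K) (hKcvx : Convex ℝ K)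
    (hfbot : ∀ x ∈ K, f x ≠ ⊥) (hflsc : LowerSemicontinuousOn f K) (hfaff : AffineOn K f)
    {x₀ : E} (hx₀ : x₀ ∈ K) :
    f x₀ = ⨆ h ∈ strictAffineMinorants K f, (h x₀ : EReal) := by
  refine le_antisymm (le_of_forall_lt fun b hb => ?_) (iSup₂_le fun h hh => (hh.2 x₀ hx₀).le)
  obtain ⟨r, hbr, hr⟩ := EReal.exists_between_coe_real hb
  obtain ⟨h, hh, hrh⟩ := exists_mem_strictAffineMinorants_gt hK hKcvx hfbot hflsc hfaff hx₀ hr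
  exact hbr.trans ((EReal.coe_lt_coe_iff.2 hrh).trans_le (le_iSup₂_of_le h hh le_rfl))

theorem directedOn_strictAffineMinorants [T2Space E] (hK : IsCompact K)
    (hKcvx : Convex ℝ K) (hflsc : LowerSemicontinuousOn f K) (hfaff : AffineOn K f) :
    DirectedOn (fun h₁ h₂ : E → ℝ => ∀ x ∈ K, h₁ x ≤ h₂ x) (strictAffineMinorants K f) := by
  intro h₁ hh₁ h₂ hh₂
  obtain ⟨⟨g₁, c₁, rfl⟩, hf₁⟩ := hh₁
  obtain ⟨⟨g₂, c₂, rfl⟩, hf₂⟩ := hh₂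
  by_cases hdom : ∃ x₁ ∈ K, f x₁ ≠ ⊤
  · obtain ⟨x₁, hx₁, hfx₁⟩ := hdom
    have graph_subset (g : E →L[ℝ] ℝ) (c : ℝ) (hf : ∀ x ∈ K, ((g x + c : ℝ) : EReal) < f x) :
        (fun x => (x, g x + c)) '' K ⊆ strictHypographOn K f :=
      image_subset_iff.2 fun x hx => ⟨hx, hf x hx⟩
    obtain ⟨g, c, hgf, hgD⟩ := exists_affine_minorant_above_union hK.isClosed hKcvx hflsc hfaff
      (hK.image (by fun_prop)) (convex_graph_image hKcvx g₁ c₁) (graph_subset g₁ c₁ hf₁)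
      ⟨_, mem_image_of_mem _ hx₁⟩ (hK.image (by fun_prop)) (convex_graph_image hKcvx g₂ c₂)
      (graph_subset g₂ c₂ hf₂) (mem_image_of_mem _ hx₁) hfx₁
    exact ⟨_, ⟨⟨g, c, rfl⟩, hgf⟩, fun x hx => (hgD _ (.inl (mem_image_of_mem _ hx))).le,
      fun x hx => (hgD _ (.inr (mem_image_of_mem _ hx))).le⟩
  · push Not at hdom
    obtain ⟨M, hM⟩ := hK.bddAbove_image (f := fun x => max (g₁ x + c₁) (g₂ x + c₂)) (by fun_prop)
    exact ⟨fun _ => M, ⟨⟨0, M, by simp⟩, fun x hx => hdom x hx ▸ EReal.coe_lt_top _⟩,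
      fun x hx => (le_max_left _ _).trans (hM (mem_image_of_mem _ hx)),
      fun x hx => (le_max_right _ _).trans (hM (mem_image_of_mem _ hx))⟩

end

/-- Every lower semicontinuous affine function
`f : K → (-∞, ∞]` on a compact convex set is the pointwise supremum of an
upward directed family of continuous affine real-valued functions on `K`. -/
theorem laff_eq_sup_directed_aff {E : Type*} [AddCommGroup E] [Module ℝ E]
    [TopologicalSpace E] [IsTopologicalAddGroup E] [ContinuousSMul ℝ E]
    [T2Space E] [LocallyConvexSpace ℝ E]
    (K : Set E) (hKcpt : IsCompact K) (hKcvx : Convex ℝ K)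
    (f : E → EReal) (hfbot : ∀ x ∈ K, f x ≠ ⊥)
    (hflsc : LowerSemicontinuousOn f K)
    (hfaff : ∀ x ∈ K, ∀ y ∈ K, ∀ t : ℝ, 0 ≤ t → t ≤ 1 →
      f (t • x + (1 - t) • y) = (t : EReal) * f x + ((1 - t : ℝ) : EReal) * f y) :
    ∃ F : Set (E → ℝ),
      (∀ h ∈ F, ContinuousOn h K ∧
        ∀ x ∈ K, ∀ y ∈ K, ∀ t : ℝ, 0 ≤ t → t ≤ 1 →
          h (t • x + (1 - t) • y) = t * h x + (1 - t) * h y) ∧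
      (∀ h₁ ∈ F, ∀ h₂ ∈ F, ∃ h₃ ∈ F, (∀ x ∈ K, h₁ x ≤ h₃ x) ∧ ∀ x ∈ K, h₂ x ≤ h₃ x) ∧
      (∀ x ∈ K, f x = ⨆ h ∈ F, ((h x : ℝ) : EReal)) := by
  refine ⟨strictAffineMinorants K f, fun h hh => ?_,
    directedOn_strictAffineMinorants hKcpt hKcvx hflsc hfaff,
    fun x hx => eq_iSup_strictAffineMinorants hKcpt.isClosed hKcvx hfbot hflsc hfaff hx⟩
  obtain ⟨hcont, haff⟩ := continuous_and_affine_of_mem_strictAffineMinorants hh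
  exact ⟨hcont.continuousOn, fun x _ y _ t _ _ => haff x y t⟩
end

section
/- Let S be the monoid ℕ ⊔ (0, ∞] (the Cuntz semigroup of the Jiang–Su algebra): elements are either 'compact' naturals n ∈ ℕ or 'soft' reals t ∈ (0, ∞], with addition extending addition of reals (a compact n plus a soft t is the soft n + t), and order given by the order of the underlying extended reals except that a nonzero soft t dominates a compact n only if n ≤ t, while a compact n dominates a soft t iff t ≤ n. Then S fails Riesz decomposition: for a = compact 1, b = c = soft 2/3, we have a ≤ b + c, but there exist no a₁, a₂ ∈ S with a = a₁ + a₂, a₁ ≤ b, and a₂ ≤ c. -/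
open scoped ENNReal

/-- The Cuntz semigroup of the Jiang–Su algebra, modeled as `ℕ ⊔ (0, ∞]`:
compact elements are naturals, soft elements are positive extended reals. -/
def JS : Type := ℕ ⊕ {t : ℝ≥0∞ // 0 < t}

namespace JS

/-- Addition: sums of compacts are compact; any sum involving a nonzero soft
element is soft, with added values. -/
noncomputable def add : JS → JS → JS
  | .inl m, .inl n => .inl (m + n)
  | .inl n, .inr t => .inr ⟨(n : ℝ≥0∞) + t.1, lt_of_lt_of_le t.2 le_add_self⟩
  | .inr t, .inl n => .inr ⟨t.1 + (n : ℝ≥0∞), lt_of_lt_of_le t.2 le_self_add⟩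
  | .inr s, .inr t => .inr ⟨s.1 + t.1, lt_of_lt_of_le s.2 le_self_add⟩

/-- The order: compare the underlying extended real values. -/
def le : JS → JS → Prop
  | .inl m, .inl n => m ≤ n
  | .inl n, .inr t => (n : ℝ≥0∞) ≤ t.1
  | .inr t, .inl n => t.1 ≤ (n : ℝ≥0∞)
  | .inr s, .inr t => s.1 ≤ t.1

end JS

/-! The order only sees values, so `1 ≤ 2/3 + 2/3 = 4/3` gives `a ≤ b + c`. But a sum is compact
only when both summands are compact, so `1 = a₁ + a₂` forces one summand to be the compact `1`,
which is not below the soft `2/3`. -/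

namespace JS

def val : JS → ℝ≥0∞
  | .inl n => n
  | .inr t => t.1

@[simp]
theorem val_inl (n : ℕ) : val (.inl n) = n := rfl

@[simp]
theorem val_inr (t : {t : ℝ≥0∞ // 0 < t}) : val (.inr t) = t.1 := rfl

theorem val_add (a b : JS) : (add a b).val = a.val + b.val := by
  rcases a with m | s <;> rcases b with n | t <;> simp [add]

theorem le_iff_val_le {a b : JS} : le a b ↔ a.val ≤ b.val := by
  rcases a with m | s <;> rcases b with n | t <;> simp [le]

theorem exists_inl_of_add_eq_inl {a b : JS} {n : ℕ} (h : add a b = .inl n) :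
    ∃ m₁ m₂ : ℕ, a = .inl m₁ ∧ b = .inl m₂ ∧ m₁ + m₂ = n := by
  rcases a with m₁ | s <;> rcases b with m₂ | t
  · exact ⟨m₁, m₂, rfl, rfl, Sum.inl.inj h⟩
  all_goals cases h

end JS

/-- The Cuntz semigroup `ℕ ⊔ (0, ∞]` of the Jiang–Su algebra
fails Riesz decomposition: for `a` the compact `1` and `b = c` the soft `2/3`,
one has `a ≤ b + c` but there is no decomposition `a = a₁ + a₂` with
`a₁ ≤ b` and `a₂ ≤ c`. -/
theorem JS_fails_riesz_decomposition :
    ∀ hb : (0 : ℝ≥0∞) < 2/3,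
    JS.le (Sum.inl 1) (JS.add (Sum.inr ⟨2/3, hb⟩) (Sum.inr ⟨2/3, hb⟩)) ∧
    ¬ ∃ a₁ a₂ : JS, Sum.inl 1 = JS.add a₁ a₂ ∧
        JS.le a₁ (Sum.inr ⟨2/3, hb⟩) ∧ JS.le a₂ (Sum.inr ⟨2/3, hb⟩) := by
  intro hb
  have two_thirds_lt_one : (2 / 3 : ℝ≥0∞) < 1 := by
    rw [ENNReal.div_lt_iff (by norm_num) (by norm_num)]
    norm_num
  have one_le_four_thirds : (1 : ℝ≥0∞) ≤ 2 / 3 + 2 / 3 := by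
    rw [ENNReal.div_add_div_same, ENNReal.le_div_iff_mul_le (by norm_num) (by norm_num)]
    norm_num
  have val_one : JS.val (Sum.inl 1) = 1 := Nat.cast_one
  refine ⟨JS.le_iff_val_le.mpr ?_, ?_⟩
  · exact (val_one.trans_le one_le_four_thirds).trans_eq
      (JS.val_add (Sum.inr ⟨2/3, hb⟩) (Sum.inr ⟨2/3, hb⟩)).symm
  rintro ⟨a₁, a₂, h, h₁, h₂⟩
  obtain ⟨m₁, m₂, rfl, rfl, hm⟩ := JS.exists_inl_of_add_eq_inl h.symm
  replace h₁ := JS.le_iff_val_le.mp h₁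
  replace h₂ := JS.le_iff_val_le.mp h₂
  obtain rfl | rfl : m₁ = 1 ∨ m₂ = 1 := by omega
  · exact (h₁.trans_lt two_thirds_lt_one).ne val_one
  · exact (h₂.trans_lt two_thirds_lt_one).ne val_one
end

section
/- Let S be a simple, non-elementary Cu-semigroup satisfying axioms (O5) and (O6), and let λ : S → [0, ∞] be a functional (an additive, order-preserving, sup-preserving map with λ(0) = 0). Assume Glimm halving: for every nonzero a ∈ S and every n ≥ 1 there exists nonzero x ∈ S with n·x ≤ a. If there exists a ∈ S with 0 < λ(a) < ∞, then λ(S) = [0, ∞]; otherwise λ(S) ⊆ {0, ∞}. -/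
open scoped ENNReal

/-- The sequential way-below relation in a partially ordered monoid. -/
def CuWayBelow {S : Type*} [Preorder S] (a b : S) : Prop :=
  ∀ f : ℕ → S, Monotone f → ∀ s : S, IsLUB (Set.range f) s → b ≤ s → ∃ n, a ≤ f n

/-!
Simplicity makes `λ` faithful once it takes one value in `(0, ∞)`: if `λ y = 0` for some
`y ≠ 0`, then `λ (∞ • y) = 0` although `∞ • y` dominates every element. Glimm halving then
gives nonzero `yₙ` with `(n + 1) • yₙ ≤ a`, so `0 < λ yₙ ≤ λ a / (n + 1)`, and a greedy
expansion writes any finite `t` as `∑ kₙ λ yₙ` with `kₙ ∈ ℕ`; this is `λ` of the supremum of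
the partial sums of `∑ kₙ • yₙ`. The value `∞` is `λ (∞ • a)`.
-/

open Filter Topology Finset NNReal

theorem NNReal.exists_hasSum_nat_mul {ε : ℕ → ℝ≥0} (hε0 : ∀ n, 0 < ε n)
    (hε : Tendsto ε atTop (𝓝 0)) (t : ℝ≥0) :
    ∃ k : ℕ → ℕ, HasSum (fun n => (k n : ℝ≥0) * ε n) t := by
  -- `r n` is the remainder left after the first `n` greedy steps
  let r : ℕ → ℝ≥0 := fun n => Nat.rec t (fun m rm => rm - ⌊rm / ε m⌋₊ * ε m) n
  refine ⟨fun n => ⌊r n / ε n⌋₊, ?_⟩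
  have hstep_le : ∀ n, (⌊r n / ε n⌋₊ : ℝ≥0) * ε n ≤ r n := fun n =>
    (le_div_iff₀ (hε0 n)).mp (Nat.floor_le zero_le)
  have hstep_lt : ∀ n, r (n + 1) < ε n := fun n => by
    refine tsub_lt_iff_left (hstep_le n) |>.mpr ?_
    rw [← add_one_mul]
    exact (div_lt_iff₀ (hε0 n)).mp (Nat.lt_floor_add_one _)
  have hsum : ∀ l, ∑ n ∈ range l, (⌊r n / ε n⌋₊ : ℝ≥0) * ε n + r l = t := by
    intro l
    induction l with
    | zero => simp [r]
    | succ l ih =>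
      rw [sum_range_succ, add_assoc, ← ih]
      congr 1
      exact add_tsub_cancel_of_le (hstep_le l)
  have hr : Tendsto r atTop (𝓝 0) := by
    rw [← tendsto_add_atTop_iff_nat 1]
    exact tendsto_of_tendsto_of_tendsto_of_le_of_le tendsto_const_nhds hε
      (fun _ => zero_le) fun n => (hstep_lt n).le
  rw [NNReal.hasSum_iff_tendsto_nat]
  have hlim := (tendsto_const_nhds (x := t)).sub hr
  rw [tsub_zero] at hlim
  refine hlim.congr fun l => ?_
  rw [← hsum l, add_tsub_cancel_right]

def PreservesMonotoneLUB {S : Type*} [Preorder S] (φ : S → ℝ≥0∞) : Prop :=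
  ∀ f : ℕ → S, Monotone f → ∀ s : S, IsLUB (Set.range f) s → φ s = ⨆ n, φ (f n)

section CuFunctional

variable {S : Type*} [AddCommMonoid S] [PartialOrder S] {φ : S →+ ℝ≥0∞}

theorem natCast_mul_map_le_of_nsmul_le (hmono : Monotone φ) {k : ℕ} {x a : S} (h : k • x ≤ a) :
    (k : ℝ≥0∞) * φ x ≤ φ a := by
  simpa only [map_nsmul, nsmul_eq_mul] using hmono h

theorem tendsto_toNNReal_map_of_succ_nsmul_le (hmono : Monotone φ) {a : S} (ha : φ a ≠ ⊤)
    {y : ℕ → S} (hy : ∀ n, (n + 1) • y n ≤ a) :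
    Tendsto (fun n => (φ (y n)).toNNReal) atTop (𝓝 0) := by
  have hbound : ∀ n : ℕ, (φ (y n)).toNNReal ≤ (φ a).toNNReal / (n + 1 : ℕ) := fun n => by
    rw [le_div_iff₀ (by positivity), mul_comm, ← ENNReal.toNNReal_natCast, ← ENNReal.toNNReal_mul]
    exact ENNReal.toNNReal_mono ha (natCast_mul_map_le_of_nsmul_le hmono (hy n))
  exact tendsto_of_tendsto_of_tendsto_of_le_of_le tendsto_const_nhds
    ((tendsto_const_div_atTop_nhds_zero_nat _).comp (tendsto_add_atTop_nat 1))
    (fun _ => zero_le) hbound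

variable [AddLeftMono S]

theorem monotone_sum_range_of_nonneg (hpos : ∀ a : S, 0 ≤ a) (g : ℕ → S) :
    Monotone fun l => ∑ n ∈ range l, g n :=
  monotone_nat_of_le_succ fun l => by
    rw [sum_range_succ]
    exact le_add_of_nonneg_right (hpos _)

theorem map_eq_tsum_of_isLUB_sum_range (hpos : ∀ a : S, 0 ≤ a) (hφ : PreservesMonotoneLUB φ)
    {g : ℕ → S} {s : S} (hs : IsLUB (Set.range fun l => ∑ n ∈ range l, g n) s) :
    φ s = ∑' n, φ (g n) := by
  rw [hφ _ (monotone_sum_range_of_nonneg hpos g) s hs, ENNReal.tsum_eq_iSup_nat]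
  simp only [map_sum]

theorem exists_map_eq_tsum (hpos : ∀ a : S, 0 ≤ a)
    (hO1 : ∀ f : ℕ → S, Monotone f → ∃ s, IsLUB (Set.range f) s)
    (hφ : PreservesMonotoneLUB φ) (g : ℕ → S) : ∃ s, φ s = ∑' n, φ (g n) :=
  (hO1 _ (monotone_sum_range_of_nonneg hpos g)).imp fun _ hs =>
    map_eq_tsum_of_isLUB_sum_range hpos hφ hs

theorem map_ne_zero_of_simple (hpos : ∀ a : S, 0 ≤ a)
    (hO1 : ∀ f : ℕ → S, Monotone f → ∃ s, IsLUB (Set.range f) s)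
    (hsimple : ∀ a : S, a ≠ 0 → ∀ b s : S, IsLUB (Set.range fun n : ℕ => n • a) s → b ≤ s)
    (hmono : Monotone φ) (hφ : PreservesMonotoneLUB φ) {a y : S} (ha : φ a ≠ 0) (hy : y ≠ 0) :
    φ y ≠ 0 := by
  intro hy0
  have hsum : (fun l => ∑ _n ∈ range l, y) = fun l : ℕ => l • y := by
    simp only [sum_const, card_range]
  obtain ⟨s, hs⟩ := hO1 _ (monotone_sum_range_of_nonneg hpos fun _ => y)
  have hs0 : φ s = 0 := by
    rw [map_eq_tsum_of_isLUB_sum_range hpos hφ hs, hy0, tsum_zero]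
  exact ha (le_zero_iff.mp (hs0 ▸ hmono (hsimple y hy a s (hsum ▸ hs))))

theorem range_eq_univ_of_simple (hpos : ∀ a : S, 0 ≤ a)
    (hO1 : ∀ f : ℕ → S, Monotone f → ∃ s, IsLUB (Set.range f) s)
    (hsimple : ∀ a : S, a ≠ 0 → ∀ b s : S, IsLUB (Set.range fun n : ℕ => n • a) s → b ≤ s)
    (hglimm : ∀ a : S, a ≠ 0 → ∀ n : ℕ, 1 ≤ n → ∃ x : S, x ≠ 0 ∧ n • x ≤ a)
    (hmono : Monotone φ) (hφ : PreservesMonotoneLUB φ) {a : S} (ha0 : φ a ≠ 0)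
    (hatop : φ a ≠ ⊤) :
    Set.range φ = Set.univ := by
  refine Set.eq_univ_of_forall fun t => ?_
  cases t with
  | top =>
    obtain ⟨s, hs⟩ := exists_map_eq_tsum hpos hO1 hφ fun _ => a
    exact ⟨s, hs.trans (ENNReal.tsum_const_eq_top_of_ne_zero ha0)⟩
  | coe t =>
    have ha : a ≠ 0 := by rintro rfl; exact ha0 (map_zero φ)
    choose y hy0 hya using fun n : ℕ => hglimm a ha (n + 1) (Nat.le_add_left 1 n)
    have hfin : ∀ n, φ (y n) ≠ ⊤ := fun n => ne_top_of_le_ne_top hatop <|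
      (le_mul_of_one_le_left zero_le (by simp)).trans
        (natCast_mul_map_le_of_nsmul_le hmono (hya n))
    have hε0 : ∀ n, 0 < (φ (y n)).toNNReal := fun n =>
      ENNReal.toNNReal_pos (map_ne_zero_of_simple hpos hO1 hsimple hmono hφ ha0 (hy0 n)) (hfin n)
    obtain ⟨k, hk⟩ := NNReal.exists_hasSum_nat_mul hε0
      (tendsto_toNNReal_map_of_succ_nsmul_le hmono hatop hya) t
    obtain ⟨s, hs⟩ := exists_map_eq_tsum hpos hO1 hφ fun n => k n • y n
    refine ⟨s, hs.trans (Eq.trans ?_ (ENNReal.hasSum_coe.mpr hk).tsum_eq)⟩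
    simp only [map_nsmul, nsmul_eq_mul, ENNReal.coe_mul, ENNReal.coe_natCast,
      ENNReal.coe_toNNReal (hfin _)]

end CuFunctional

theorem functional_range_simple_Cu_general {S : Type*} [AddCommMonoid S] [PartialOrder S]
    [CovariantClass S S (· + ·) (· ≤ ·)]
    (hpos : ∀ a : S, 0 ≤ a)
    (hO1 : ∀ f : ℕ → S, Monotone f → ∃ s, IsLUB (Set.range f) s)
    (hsimple : ∀ a : S, a ≠ 0 → ∀ b s : S,
      IsLUB (Set.range fun n : ℕ => n • a) s → b ≤ s)
    (lam : S → ℝ≥0∞) (hlam0 : lam 0 = 0)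
    (hlamadd : ∀ a b : S, lam (a + b) = lam a + lam b)
    (hlammono : Monotone lam)
    (hlamsup : ∀ f : ℕ → S, Monotone f → ∀ s : S, IsLUB (Set.range f) s →
      lam s = ⨆ n, lam (f n))
    (hglimm : ∀ a : S, a ≠ 0 → ∀ n : ℕ, 1 ≤ n → ∃ x : S, x ≠ 0 ∧ n • x ≤ a) :
    ((∃ a : S, 0 < lam a ∧ lam a < ⊤) → Set.range lam = Set.univ) ∧
    ((¬ ∃ a : S, 0 < lam a ∧ lam a < ⊤) → Set.range lam ⊆ {0, ⊤}) := by
  let φ : S →+ ℝ≥0∞ := { toFun := lam, map_zero' := hlam0, map_add' := hlamadd }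
  constructor
  · rintro ⟨a, ha0, hatop⟩
    exact range_eq_univ_of_simple (φ := φ) hpos hO1 hsimple hglimm hlammono hlamsup
      ha0.ne' hatop.ne
  · rintro h _ ⟨b, rfl⟩
    by_contra hb
    simp only [Set.mem_insert_iff, Set.mem_singleton_iff, not_or] at hb
    exact h ⟨b, pos_iff_ne_zero.mpr hb.1, lt_top_iff_ne_top.mpr hb.2⟩

/-- Let `S` be a simple, non-elementary Cu-semigroup satisfying
(O5) and (O6), and `λ : S → [0,∞]` a functional. Assuming Glimm halving, if
some `a` has `0 < λ(a) < ∞` then `λ` is surjective onto `[0,∞]`; otherwise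
`λ` only takes the values `0` and `∞`. -/
theorem functional_range_simple_Cu {S : Type*} [AddCommMonoid S] [PartialOrder S]
    [CovariantClass S S (· + ·) (· ≤ ·)]
    (hpos : ∀ a : S, 0 ≤ a)
    (hO1 : ∀ f : ℕ → S, Monotone f → ∃ s, IsLUB (Set.range f) s)
    (hO2 : ∀ a : S, ∃ f : ℕ → S, Monotone f ∧ (∀ n, CuWayBelow (f n) (f (n + 1))) ∧
      IsLUB (Set.range f) a)
    (hO3 : ∀ a' a b' b : S, CuWayBelow a' a → CuWayBelow b' b →
      CuWayBelow (a' + b') (a + b))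
    (hO4 : ∀ f g : ℕ → S, Monotone f → Monotone g → ∀ s t : S,
      IsLUB (Set.range f) s → IsLUB (Set.range g) t →
      IsLUB (Set.range fun n => f n + g n) (s + t))
    (hO5 : ∀ a' a b' b c : S, a + b ≤ c → CuWayBelow a' a → CuWayBelow b' b →
      ∃ x : S, a' + x ≤ c ∧ c ≤ a + x ∧ CuWayBelow b' x)
    (hO6 : ∀ a' a b c : S, CuWayBelow a' a → a ≤ b + c →
      ∃ e f : S, a' ≤ e + f ∧ e ≤ a ∧ e ≤ b ∧ f ≤ a ∧ f ≤ c)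
    (hsimple : ∀ a : S, a ≠ 0 → ∀ b s : S,
      IsLUB (Set.range fun n : ℕ => n • a) s → b ≤ s)
    (hnonelem : ∀ a : S, a ≠ 0 → ∃ b : S, b ≠ 0 ∧ b ≤ a ∧ b ≠ a)
    (lam : S → ℝ≥0∞) (hlam0 : lam 0 = 0)
    (hlamadd : ∀ a b : S, lam (a + b) = lam a + lam b)
    (hlammono : Monotone lam)
    (hlamsup : ∀ f : ℕ → S, Monotone f → ∀ s : S, IsLUB (Set.range f) s →
      lam s = ⨆ n, lam (f n))
    (hglimm : ∀ a : S, a ≠ 0 → ∀ n : ℕ, 1 ≤ n → ∃ x : S, x ≠ 0 ∧ n • x ≤ a) :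
    ((∃ a : S, 0 < lam a ∧ lam a < ⊤) → Set.range lam = Set.univ) ∧
    ((¬ ∃ a : S, 0 < lam a ∧ lam a < ⊤) → Set.range lam ⊆ {0, ⊤}) :=
  functional_range_simple_Cu_general hpos hO1 hsimple lam hlam0 hlamadd hlammono hlamsup hglimm
end

section
/- Let S be a Cu-semigroup. Suppose that for every a', a, b, c, x', x ∈ S with a' ≪ a ≤ b + c and x' ≪ x ≤ a, x ≤ b, there exists e ∈ S with a' ≤ e + c, x' ≪ e, e ≤ a, and e ≤ b. Then S satisfies (O6+): for all a, b, c, x', x, y', y ∈ S with a ≤ b + c, x' ≪ x ≤ a, b, and y' ≪ y ≤ a, c, there exist e, f ∈ S with a ≤ e + f, x' ≪ e ≤ a, b, and y' ≪ f ≤ a, c. -/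
theorem exists_seq_of_forall_exists {α : Type*} {P : α → Prop} {R : ℕ → α → α → Prop}
    {x₀ : α} (h₀ : P x₀) (step : ∀ n x, P x → ∃ y, P y ∧ R n x y) :
    ∃ f : ℕ → α, f 0 = x₀ ∧ ∀ n, P (f n) ∧ R n (f n) (f (n + 1)) := by
  choose g hgP hgR using step
  let F : ℕ → {x // P x} := fun n => Nat.rec ⟨x₀, h₀⟩ (fun n x => ⟨g n x x.2, hgP n x x.2⟩) n
  exact ⟨fun n => (F n).1, rfl, fun n => ⟨(F n).2, hgR n _ (F n).2⟩⟩

section CuWayBelow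

variable {S : Type*}

theorem CuWayBelow.le [Preorder S] {u v : S} (h : CuWayBelow u v) : u ≤ v := by
  obtain ⟨_, hn⟩ := h (fun _ => v) monotone_const v
    (by rw [Set.range_const]; exact isLUB_singleton) le_rfl
  exact hn

theorem CuWayBelow.trans_le [Preorder S] {u v w : S} (h : CuWayBelow u v) (hvw : v ≤ w) :
    CuWayBelow u w :=
  fun f hf s hs hws => h f hf s hs (hvw.trans hws)

theorem LE.le.trans_cuWayBelow [Preorder S] {u v w : S} (huv : u ≤ v) (h : CuWayBelow v w) :
    CuWayBelow u w :=
  fun f hf s hs hws => (h f hf s hs hws).imp fun _ hn => huv.trans hn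

theorem CuWayBelow.exists_between_of_le_add [AddCommMonoid S] [PartialOrder S]
    [CovariantClass S S (· + ·) (· ≤ ·)]
    (hO2 : ∀ a : S, ∃ f : ℕ → S, Monotone f ∧ (∀ n, CuWayBelow (f n) (f (n + 1))) ∧
      IsLUB (Set.range f) a)
    (hO4 : ∀ f g : ℕ → S, Monotone f → Monotone g → ∀ s t : S,
      IsLUB (Set.range f) s → IsLUB (Set.range g) t →
      IsLUB (Set.range fun n => f n + g n) (s + t))
    {c z E u' u : S} (hz : CuWayBelow z E) (hu : CuWayBelow u' u) (hle : u ≤ E + c) :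
    ∃ e, CuWayBelow z e ∧ CuWayBelow e E ∧ u' ≤ e + c := by
  obtain ⟨g, hg_mono, hg_wb, hg_lub⟩ := hO2 E
  obtain ⟨k₁, hk₁⟩ := hz g hg_mono E hg_lub le_rfl
  have hc_lub : IsLUB (Set.range fun _ : ℕ => c) c := by
    rw [Set.range_const]; exact isLUB_singleton
  have hgc_mono : Monotone fun k => g k + c := fun _ _ hij => add_le_add_left (hg_mono hij) c
  obtain ⟨k₂, hk₂⟩ := hu _ hgc_mono (E + c) (hO4 g _ hg_mono monotone_const E c hg_lub hc_lub) hle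
  set k := max k₁ k₂
  refine ⟨g (k + 1), ?_, (hg_wb _).trans_le (hg_lub.1 ⟨k + 2, rfl⟩), ?_⟩
  · exact (hk₁.trans (hg_mono (le_max_left k₁ k₂))).trans_cuWayBelow (hg_wb k)
  · exact hk₂.trans (hgc_mono ((le_max_right k₁ k₂).trans k.le_succ))

theorem exists_le_add_of_single_step [AddCommMonoid S] [PartialOrder S]
    [CovariantClass S S (· + ·) (· ≤ ·)]
    (hO1 : ∀ f : ℕ → S, Monotone f → ∃ s, IsLUB (Set.range f) s)
    (hO2 : ∀ a : S, ∃ f : ℕ → S, Monotone f ∧ (∀ n, CuWayBelow (f n) (f (n + 1))) ∧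
      IsLUB (Set.range f) a)
    (hO4 : ∀ f g : ℕ → S, Monotone f → Monotone g → ∀ s t : S,
      IsLUB (Set.range f) s → IsLUB (Set.range g) t →
      IsLUB (Set.range fun n => f n + g n) (s + t))
    (H : ∀ a' a b c x' x : S, CuWayBelow a' a → a ≤ b + c →
      CuWayBelow x' x → x ≤ a → x ≤ b →
      ∃ e : S, a' ≤ e + c ∧ CuWayBelow x' e ∧ e ≤ a ∧ e ≤ b)
    {a b c x' x : S} (hbc : a ≤ b + c) (hx : CuWayBelow x' x) (hxa : x ≤ a) (hxb : x ≤ b) :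
    ∃ e, a ≤ e + c ∧ CuWayBelow x' e ∧ e ≤ a ∧ e ≤ b := by
  obtain ⟨u, -, hu_wb, hu_lub⟩ := hO2 a
  have hu_wb_a : ∀ n, CuWayBelow (u n) a := fun n => (hu_wb n).trans_le (hu_lub.1 ⟨n + 1, rfl⟩)
  let Approx : S → Prop := fun y => ∃ z, CuWayBelow y z ∧ z ≤ a ∧ z ≤ b
  have step : ∀ n y, Approx y → ∃ y₁, Approx y₁ ∧ CuWayBelow y y₁ ∧ u n ≤ y₁ + c := by
    rintro n y ⟨z, hyz, hza, hzb⟩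
    obtain ⟨z₁, hz₁c, hyz₁, hz₁a, hz₁b⟩ := H (u (n + 1)) a b c y z (hu_wb_a _) hbc hyz hza hzb
    obtain ⟨y₁, hyy₁, hy₁z₁, hu⟩ := hyz₁.exists_between_of_le_add hO2 hO4 (hu_wb n) hz₁c
    exact ⟨y₁, ⟨z₁, hy₁z₁, hz₁a, hz₁b⟩, hyy₁, hu⟩
  obtain ⟨f, rfl, hf⟩ := exists_seq_of_forall_exists (P := Approx) ⟨x, hx, hxa, hxb⟩ step
  obtain ⟨e, he⟩ := hO1 f (monotone_nat_of_le_succ fun n => (hf n).2.1.le)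
  have hf_le_e : ∀ n, f n ≤ e := fun n => he.1 ⟨n, rfl⟩
  have hf_le : ∀ n, f n ≤ a ∧ f n ≤ b := fun n => by
    obtain ⟨z, hfz, hza, hzb⟩ := (hf n).1
    exact ⟨hfz.le.trans hza, hfz.le.trans hzb⟩
  refine ⟨e, hu_lub.2 ?_, (hf 0).2.1.trans_le (hf_le_e 1), he.2 ?_, he.2 ?_⟩
  · exact Set.forall_mem_range.2 fun n => (hf n).2.2.trans (add_le_add_left (hf_le_e _) c)
  · exact Set.forall_mem_range.2 fun n => (hf_le n).1
  · exact Set.forall_mem_range.2 fun n => (hf_le n).2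

end CuWayBelow

theorem O6plus_of_single_step_general {S : Type*} [AddCommMonoid S] [PartialOrder S]
    [CovariantClass S S (· + ·) (· ≤ ·)]
    (hO1 : ∀ f : ℕ → S, Monotone f → ∃ s, IsLUB (Set.range f) s)
    (hO2 : ∀ a : S, ∃ f : ℕ → S, Monotone f ∧ (∀ n, CuWayBelow (f n) (f (n + 1))) ∧
      IsLUB (Set.range f) a)
    (hO4 : ∀ f g : ℕ → S, Monotone f → Monotone g → ∀ s t : S,
      IsLUB (Set.range f) s → IsLUB (Set.range g) t →
      IsLUB (Set.range fun n => f n + g n) (s + t))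
    (H : ∀ a' a b c x' x : S, CuWayBelow a' a → a ≤ b + c →
      CuWayBelow x' x → x ≤ a → x ≤ b →
      ∃ e : S, a' ≤ e + c ∧ CuWayBelow x' e ∧ e ≤ a ∧ e ≤ b) :
    ∀ a b c x' x y' y : S, a ≤ b + c →
      CuWayBelow x' x → x ≤ a → x ≤ b →
      CuWayBelow y' y → y ≤ a → y ≤ c →
      ∃ e f : S, a ≤ e + f ∧ CuWayBelow x' e ∧ e ≤ a ∧ e ≤ b ∧
        CuWayBelow y' f ∧ f ≤ a ∧ f ≤ c := by
  intro a b c x' x y' y hbc hx hxa hxb hy hya hyc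
  obtain ⟨e, hae, hx'e, hea, heb⟩ :=
    exists_le_add_of_single_step hO1 hO2 hO4 H hbc hx hxa hxb
  obtain ⟨f, haf, hy'f, hfa, hfc⟩ :=
    exists_le_add_of_single_step hO1 hO2 hO4 H (add_comm e c ▸ hae) hy hya hyc
  exact ⟨e, f, add_comm f e ▸ haf, hx'e, hea, heb, hy'f, hfa, hfc⟩

/-- In a Cu-semigroup, if every `a' ≪ a ≤ b + c` and
`x' ≪ x ≤ a, b` admit `e` with `a' ≤ e + c` and `x' ≪ e ≤ a, b`, then the
strengthened almost Riesz decomposition axiom (O6+) holds. -/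
theorem O6plus_of_single_step {S : Type*} [AddCommMonoid S] [PartialOrder S]
    [CovariantClass S S (· + ·) (· ≤ ·)]
    (hpos : ∀ a : S, 0 ≤ a)
    (hO1 : ∀ f : ℕ → S, Monotone f → ∃ s, IsLUB (Set.range f) s)
    (hO2 : ∀ a : S, ∃ f : ℕ → S, Monotone f ∧ (∀ n, CuWayBelow (f n) (f (n + 1))) ∧
      IsLUB (Set.range f) a)
    (hO3 : ∀ a' a b' b : S, CuWayBelow a' a → CuWayBelow b' b →
      CuWayBelow (a' + b') (a + b))
    (hO4 : ∀ f g : ℕ → S, Monotone f → Monotone g → ∀ s t : S,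
      IsLUB (Set.range f) s → IsLUB (Set.range g) t →
      IsLUB (Set.range fun n => f n + g n) (s + t))
    (H : ∀ a' a b c x' x : S, CuWayBelow a' a → a ≤ b + c →
      CuWayBelow x' x → x ≤ a → x ≤ b →
      ∃ e : S, a' ≤ e + c ∧ CuWayBelow x' e ∧ e ≤ a ∧ e ≤ b) :
    ∀ a b c x' x y' y : S, a ≤ b + c →
      CuWayBelow x' x → x ≤ a → x ≤ b →
      CuWayBelow y' y → y ≤ a → y ≤ c →
      ∃ e f : S, a ≤ e + f ∧ CuWayBelow x' e ∧ e ≤ a ∧ e ≤ b ∧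
        CuWayBelow y' f ∧ f ≤ a ∧ f ≤ c :=
  O6plus_of_single_step_general hO1 hO2 hO4 H
end

section
/- Let S and T be dcpos, and let α : T → S (upper adjoint) and κ : S → T (lower adjoint) form a Galois connection: κ(s) ≤ t if and only if s ≤ α(t) for all s ∈ S, t ∈ T. If S is a domain (continuous dcpo) and κ preserves the way-below relation, then α preserves suprema of upward directed sets. -/
/-- The (net) way-below relation in a dcpo: `a ≪ b` iff every upward directed
set whose supremum dominates `b` contains an element dominating `a`. -/
def DcpoWayBelow {S : Type*} [Preorder S] (a b : S) : Prop :=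
  ∀ D : Set S, D.Nonempty → DirectedOn (· ≤ ·) D → ∀ s : S, IsLUB D s → b ≤ s →
    ∃ d ∈ D, a ≤ d

/-- If `α : T → S` and `κ : S → T` form a Galois connection
between dcpos (`κ s ≤ t ↔ s ≤ α t`), `S` is a domain, and the lower adjoint
`κ` preserves the way-below relation, then the upper adjoint `α` preserves
suprema of upward directed sets. -/
theorem galois_upper_adjoint_scott_continuous {S T : Type*}
    [PartialOrder S] [PartialOrder T]
    (hSdcpo : ∀ D : Set S, D.Nonempty → DirectedOn (· ≤ ·) D → ∃ s, IsLUB D s)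
    (hTdcpo : ∀ D : Set T, D.Nonempty → DirectedOn (· ≤ ·) D → ∃ t, IsLUB D t)
    (α : T → S) (κ : S → T)
    (hgc : ∀ (s : S) (t : T), κ s ≤ t ↔ s ≤ α t)
    (hdomain : ∀ a : S, DirectedOn (· ≤ ·) {x : S | DcpoWayBelow x a} ∧
      IsLUB {x : S | DcpoWayBelow x a} a)
    (hκwb : ∀ s s' : S, DcpoWayBelow s s' → DcpoWayBelow (κ s) (κ s')) :
    ∀ D : Set T, D.Nonempty → DirectedOn (· ≤ ·) D → ∀ t : T, IsLUB D t →
      IsLUB (α '' D) (α t) := by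
  intro D hDne hDdir t ht
  have hmono : ∀ t₁ t₂ : T, t₁ ≤ t₂ → α t₁ ≤ α t₂ := by
    intro t₁ t₂ h
    exact (hgc _ _).mp (le_trans ((hgc (α t₁) t₁).mpr le_rfl) h)
  constructor
  · rintro _ ⟨d, hd, rfl⟩
    exact hmono _ _ (ht.1 hd)
  · intro u hu
    obtain ⟨hdir, hlub⟩ := hdomain (α t)
    refine hlub.2 ?_
    intro x hx
    have hwb : DcpoWayBelow (κ x) (κ (α t)) := hκwb _ _ hx
    have hκαt : κ (α t) ≤ t := (hgc _ _).mpr le_rfl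
    obtain ⟨d, hd, hxd⟩ := hwb D hDne hDdir t ht hκαt
    exact le_trans ((hgc _ _).mp hxd) (hu ⟨d, hd, rfl⟩)
end

section
/- Let K be a compact convex set and let pos-LAff(K) denote the strictly positive lower semicontinuous affine functions K → (0, ∞] together with 0, ordered pointwise. Then pos-LAff(K) satisfies axiom (O5): given a', a, b', b, c in pos-LAff(K) with a + b ≤ c, a' ≪ a, b' ≪ b, there exists x in pos-LAff(K) with a' + x ≤ c ≤ a + x and b' ≪ x. -/
variable {E : Type*} [AddCommGroup E] [Module ℝ E] [TopologicalSpace E]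

/-- Membership in `pos-LAff(K) = LAff(K)₊₊ ∪ {0}`: either a strictly positive
lower semicontinuous affine function `K → (0, ∞]`, or the zero function. -/
def IsPosLAffOn (K : Set E) (f : E → EReal) : Prop :=
  (LowerSemicontinuousOn f K ∧
    (∀ x ∈ K, ∀ y ∈ K, ∀ t : ℝ, 0 ≤ t → t ≤ 1 →
      f (t • x + (1 - t) • y) = (t : EReal) * f x + ((1 - t : ℝ) : EReal) * f y) ∧
    ∀ x ∈ K, 0 < f x) ∨ (∀ x ∈ K, f x = 0)

/-- The sequential way-below relation in `pos-LAff(K)`, via its standard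
characterization: `f ≪ g` iff `f = 0` or there are a continuous affine `h`
and `ε > 0` with `f + ε ≤ h ≤ g` on `K`. -/
def PosLAffWayBelow (K : Set E) (f g : E → EReal) : Prop :=
  (∀ x ∈ K, f x = 0) ∨
    ∃ h : E → ℝ, ContinuousOn h K ∧
      (∀ x ∈ K, ∀ y ∈ K, ∀ t : ℝ, 0 ≤ t → t ≤ 1 →
        h (t • x + (1 - t) • y) = t * h x + (1 - t) * h y) ∧
      ∃ ε : ℝ, 0 < ε ∧ (∀ x ∈ K, f x + (ε : EReal) ≤ (h x : EReal)) ∧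
        ∀ x ∈ K, (h x : EReal) ≤ g x

/-
If `a' = 0`, take `x = c`. Otherwise `a' + ε ≤ h ≤ a` for a continuous affine `h`; put
`g := h - ε / 2` and `x := c - g`. Subtracting a continuous affine real function keeps `x`
lower semicontinuous and affine, and `x ≥ b + ε / 2 > 0` because `g + ε / 2 ≤ a` and
`a + b ≤ c`. Then `a' + x ≤ g + x = c ≤ a + x`, and `b' ≪ b ≤ x` gives `b' ≪ x`.
-/

lemma EReal.add_sub_coe_add (a b : EReal) (u v : ℝ) : a + b - ↑(u + v) = (a - u) + (b - v) := by
  rw [sub_eq_add_neg, ← EReal.coe_neg, _root_.neg_add u v, EReal.coe_add, EReal.coe_neg,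
    EReal.coe_neg, sub_eq_add_neg, sub_eq_add_neg]
  exact add_add_add_comm _ _ _ _

namespace IsPosLAffOn

variable {K : Set E} {f : E → EReal}

lemma nonneg (hf : IsPosLAffOn K f) {p : E} (hp : p ∈ K) : 0 ≤ f p := by
  rcases hf with ⟨-, -, hpos⟩ | hzero
  · exact (hpos p hp).le
  · exact (hzero p hp).ge

lemma lowerSemicontinuousOn (hf : IsPosLAffOn K f) : LowerSemicontinuousOn f K := by
  rcases hf with ⟨hlsc, -, -⟩ | hzero
  · exact hlsc
  · intro p hp y hy
    filter_upwards [self_mem_nhdsWithin] with q hq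
    rwa [hzero q hq, ← hzero p hp]

lemma map_convex_combination (hK : Convex ℝ K) (hf : IsPosLAffOn K f) :
    ∀ x ∈ K, ∀ y ∈ K, ∀ t : ℝ, 0 ≤ t → t ≤ 1 →
      f (t • x + (1 - t) • y) = (t : EReal) * f x + ((1 - t : ℝ) : EReal) * f y := by
  rcases hf with ⟨-, haff, -⟩ | hzero
  · exact haff
  · intro x hx y hy t ht0 ht1
    have hxy : t • x + (1 - t) • y ∈ K := hK hx hy ht0 (sub_nonneg.2 ht1) (add_sub_cancel t 1)
    simp [hzero x hx, hzero y hy, hzero _ hxy]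

lemma sub_real (hK : Convex ℝ K) (hf : IsPosLAffOn K f) {g : E → ℝ} (hg : ContinuousOn g K)
    (hgaff : ∀ x ∈ K, ∀ y ∈ K, ∀ t : ℝ, 0 ≤ t → t ≤ 1 →
      g (t • x + (1 - t) • y) = t * g x + (1 - t) * g y)
    (hpos : ∀ p ∈ K, 0 < f p - g p) : IsPosLAffOn K (fun p => f p - g p) := by
  refine Or.inl ⟨?_, ?_, hpos⟩
  · have hneg : LowerSemicontinuousOn (fun p => -(g p : EReal)) K :=
      (continuous_coe_real_ereal.comp_continuousOn hg.neg).lowerSemicontinuousOn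
    exact hf.lowerSemicontinuousOn.add' hneg fun p hp =>
      EReal.continuousAt_add (.inr (by simp)) (.inr (by simp))
  · intro x hx y hy t ht0 ht1
    dsimp only
    rw [hf.map_convex_combination hK x hx y hy t ht0 ht1, hgaff x hx y hy t ht0 ht1,
      EReal.mul_sub_of_nonneg_of_ne_top (by exact_mod_cast ht0) (EReal.coe_ne_top _),
      EReal.mul_sub_of_nonneg_of_ne_top (by exact_mod_cast sub_nonneg.2 ht1) (EReal.coe_ne_top _),
      ← EReal.coe_mul, ← EReal.coe_mul, EReal.add_sub_coe_add]

end IsPosLAffOn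

lemma PosLAffWayBelow.mono_right {K : Set E} {f g g' : E → EReal} (hfg : PosLAffWayBelow K f g)
    (hgg' : ∀ p ∈ K, g p ≤ g' p) : PosLAffWayBelow K f g' := by
  rcases hfg with hzero | ⟨h, hcont, haff, ε, hε, hfh, hhg⟩
  · exact .inl hzero
  · exact .inr ⟨h, hcont, haff, ε, hε, hfh, fun p hp => (hhg p hp).trans (hgg' p hp)⟩

lemma posLAff_O5_sub_of_le {K : Set E} (hK : Convex ℝ K) {a' a b' b c : E → EReal}
    (hb : IsPosLAffOn K b) (hc : IsPosLAffOn K c) (habc : ∀ p ∈ K, a p + b p ≤ c p)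
    (hb'b : PosLAffWayBelow K b' b) {g : E → ℝ} (hg : ContinuousOn g K)
    (hgaff : ∀ x ∈ K, ∀ y ∈ K, ∀ t : ℝ, 0 ≤ t → t ≤ 1 →
      g (t • x + (1 - t) • y) = t * g x + (1 - t) * g y)
    {δ : ℝ} (hδ : 0 < δ) (ha'g : ∀ p ∈ K, a' p ≤ g p)
    (hga : ∀ p ∈ K, ((g p + δ : ℝ) : EReal) ≤ a p) :
    IsPosLAffOn K (fun p => c p - g p) ∧ (∀ p ∈ K, a' p + (c p - g p) ≤ c p) ∧
      (∀ p ∈ K, c p ≤ a p + (c p - g p)) ∧ PosLAffWayBelow K b' (fun p => c p - g p) := by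
  have hδ' : (0 : EReal) < δ := EReal.coe_pos.2 hδ
  have hg_le_a : ∀ p ∈ K, (g p : EReal) ≤ a p := fun p hp =>
    (EReal.coe_le_coe_iff.2 (le_add_of_nonneg_right hδ.le)).trans (hga p hp)
  have hbx : ∀ p ∈ K, b p + δ ≤ c p - g p := by
    intro p hp
    rw [EReal.le_sub_iff_add_le (.inl (EReal.coe_ne_bot _)) (.inl (EReal.coe_ne_top _)),
      add_assoc, ← EReal.coe_add, add_comm δ, add_comm (b p)]
    calc ((g p + δ : ℝ) : EReal) + b p ≤ a p + b p := by gcongr; exact hga p hp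
      _ ≤ c p := habc p hp
  refine ⟨hc.sub_real hK hg hgaff fun p hp => ?_, fun p hp => ?_, fun p hp => ?_,
    hb'b.mono_right fun p hp => (le_add_of_nonneg_right hδ'.le).trans (hbx p hp)⟩
  · exact (hδ'.trans_le (le_add_of_nonneg_left (hb.nonneg hp))).trans_le (hbx p hp)
  · calc a' p + (c p - g p) ≤ g p + (c p - g p) := by gcongr; exact ha'g p hp
      _ = c p := by rw [add_comm, EReal.sub_add_cancel]
  · calc c p = g p + (c p - g p) := by rw [add_comm, EReal.sub_add_cancel]
      _ ≤ a p + (c p - g p) := by gcongr; exact hg_le_a p hp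

theorem posLAff_O5_general
    (K : Set E) (hKcvx : Convex ℝ K)
    (a' a b' b c : E → EReal)
    (ha : IsPosLAffOn K a)
    (hb : IsPosLAffOn K b) (hc : IsPosLAffOn K c)
    (habc : ∀ x ∈ K, a x + b x ≤ c x)
    (ha'a : PosLAffWayBelow K a' a) (hb'b : PosLAffWayBelow K b' b) :
    ∃ x : E → EReal, IsPosLAffOn K x ∧
      (∀ p ∈ K, a' p + x p ≤ c p) ∧ (∀ p ∈ K, c p ≤ a p + x p) ∧
      PosLAffWayBelow K b' x := by
  have hb_le_c : ∀ p ∈ K, b p ≤ c p := fun p hp =>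
    (le_add_of_nonneg_left (ha.nonneg hp)).trans (habc p hp)
  rcases ha'a with ha'0 | ⟨h, hcont, haff, ε, hε, ha'h, hha⟩
  · exact ⟨c, hc, fun p hp => by rw [ha'0 p hp, zero_add],
      fun p hp => le_add_of_nonneg_left (ha.nonneg hp), hb'b.mono_right hb_le_c⟩
  refine ⟨_, posLAff_O5_sub_of_le hKcvx hb hc habc hb'b (g := fun p => h p - ε / 2)
    (hcont.sub continuousOn_const) (fun x hx y hy t ht0 ht1 => ?_) (half_pos hε)
    (fun p hp => ?_) (fun p hp => by simpa using hha p hp)⟩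
  · rw [haff x hx y hy t ht0 ht1]
    ring
  · rw [EReal.coe_sub, EReal.le_sub_iff_add_le (.inl (EReal.coe_ne_bot _))
      (.inl (EReal.coe_ne_top _))]
    calc a' p + (ε / 2 : ℝ) ≤ a' p + ε := by gcongr; linarith
      _ ≤ h p := ha'h p hp

/-- `pos-LAff(K)` on a compact convex set satisfies axiom (O5):
if `a + b ≤ c`, `a' ≪ a` and `b' ≪ b`, then there is `x ∈ pos-LAff(K)` with
`a' + x ≤ c ≤ a + x` and `b' ≪ x`. -/
theorem posLAff_O5 [IsTopologicalAddGroup E] [ContinuousSMul ℝ E]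
    [T2Space E] [LocallyConvexSpace ℝ E]
    (K : Set E) (hKcpt : IsCompact K) (hKcvx : Convex ℝ K)
    (a' a b' b c : E → EReal)
    (ha' : IsPosLAffOn K a') (ha : IsPosLAffOn K a) (hb' : IsPosLAffOn K b')
    (hb : IsPosLAffOn K b) (hc : IsPosLAffOn K c)
    (habc : ∀ x ∈ K, a x + b x ≤ c x)
    (ha'a : PosLAffWayBelow K a' a) (hb'b : PosLAffWayBelow K b' b) :
    ∃ x : E → EReal, IsPosLAffOn K x ∧
      (∀ p ∈ K, a' p + x p ≤ c p) ∧ (∀ p ∈ K, c p ≤ a p + x p) ∧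
      PosLAffWayBelow K b' x :=
  posLAff_O5_general K hKcvx a' a b' b c ha hb hc habc ha'a hb'b
end

section
/- Let S be a countably based Cu-semigroup (there is a countable subset B such that every element of S is the supremum of an increasing sequence in B). Then every upward directed subset D of S has a supremum in S, and the (net) way-below relation on S coincides with the sequential way-below relation. -/
/-- The (net) way-below relation: `a ≪ b` iff every nonempty upward directed
set whose supremum dominates `b` contains an element dominating `a`. -/
def NetWayBelow {S : Type*} [Preorder S] (a b : S) : Prop :=
  ∀ D : Set S, D.Nonempty → DirectedOn (· ≤ ·) D → ∀ s : S, IsLUB D s → b ≤ s →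
    ∃ d ∈ D, a ≤ d

/-- In a countably based Cu-semigroup, every nonempty directed set contains a
monotone sequence with the same supremum. -/
theorem exists_chain_of_directed {S : Type*} [PartialOrder S]
    (hO1 : ∀ f : ℕ → S, Monotone f → ∃ s, IsLUB (Set.range f) s)
    {B : Set S} (hBc : B.Countable)
    (hbas : ∀ a : S, ∃ f : ℕ → S, Monotone f ∧ (∀ n, f n ∈ B) ∧ IsLUB (Set.range f) a)
    (D : Set S) (hne : D.Nonempty) (hdir : DirectedOn (· ≤ ·) D) :
    ∃ g : ℕ → S, Monotone g ∧ (∀ n, g n ∈ D) ∧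
      ∃ s, IsLUB (Set.range g) s ∧ IsLUB D s := by
  classical
  set E : Set S := {b | b ∈ B ∧ ∃ d ∈ D, b ≤ d} with hEdef
  have hEc : E.Countable := hBc.mono fun x hx => hx.1
  obtain ⟨d0, hd0⟩ := hne
  obtain ⟨f0, hf0m, hf0B, hf0lub⟩ := hbas d0
  have hEne : E.Nonempty := ⟨f0 0, hf0B 0, d0, hd0, hf0lub.1 (Set.mem_range_self 0)⟩
  obtain ⟨e, he⟩ := hEc.exists_eq_range hEne
  have hw : ∀ n, ∃ d ∈ D, e n ≤ d := fun n => (he ▸ Set.mem_range_self n : e n ∈ E).2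
  choose w hwD hwle using hw
  have step : ∀ x ∈ D, ∀ n : ℕ, ∃ z ∈ D, x ≤ z ∧ w n ≤ z :=
    fun x hx n => hdir x hx (w n) (hwD n)
  let g : ℕ → {x // x ∈ D} := fun n =>
    Nat.rec ⟨w 0, hwD 0⟩ (fun n p =>
      ⟨(step p.1 p.2 (n + 1)).choose, (step p.1 p.2 (n + 1)).choose_spec.1⟩) n
  have hstep : ∀ n, (g n).1 ≤ (g (n + 1)).1 ∧ w (n + 1) ≤ (g (n + 1)).1 := by
    intro n
    exact ⟨(step (g n).1 (g n).2 (n + 1)).choose_spec.2.1,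
      (step (g n).1 (g n).2 (n + 1)).choose_spec.2.2⟩
  have hmono : Monotone fun n => (g n).1 := monotone_nat_of_le_succ fun n => (hstep n).1
  have hew : ∀ n, e n ≤ (g n).1 := by
    intro n
    cases n with
    | zero => exact hwle 0
    | succ n => exact le_trans (hwle (n + 1)) (hstep n).2
  obtain ⟨s, hs⟩ := hO1 _ hmono
  refine ⟨fun n => (g n).1, hmono, fun n => (g n).2, s, hs, ?_, ?_⟩
  · -- upper bound of D
    intro d hd
    obtain ⟨f, hfm, hfB, hflub⟩ := hbas d
    refine hflub.2 fun x hx => ?_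
    obtain ⟨k, rfl⟩ := hx
    have hfkE : f k ∈ E := ⟨hfB k, d, hd, hflub.1 (Set.mem_range_self k)⟩
    obtain ⟨m, hm⟩ : f k ∈ Set.range e := he ▸ hfkE
    calc f k = e m := hm.symm
      _ ≤ (g m).1 := hew m
      _ ≤ s := hs.1 (Set.mem_range_self m)
  · -- least among upper bounds of D
    intro u hu
    refine hs.2 fun x hx => ?_
    obtain ⟨n, rfl⟩ := hx
    exact hu (g n).2

/-- A countably based Cu-semigroup is a domain: every upward
directed subset has a supremum, and the net way-below relation coincides with
the sequential one. -/
theorem countably_based_Cu_domain {S : Type*} [AddCommMonoid S] [PartialOrder S]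
    [CovariantClass S S (· + ·) (· ≤ ·)]
    (hpos : ∀ a : S, 0 ≤ a)
    (hO1 : ∀ f : ℕ → S, Monotone f → ∃ s, IsLUB (Set.range f) s)
    (hO2 : ∀ a : S, ∃ f : ℕ → S, Monotone f ∧ (∀ n, CuWayBelow (f n) (f (n + 1))) ∧
      IsLUB (Set.range f) a)
    (hO3 : ∀ a' a b' b : S, CuWayBelow a' a → CuWayBelow b' b →
      CuWayBelow (a' + b') (a + b))
    (hO4 : ∀ f g : ℕ → S, Monotone f → Monotone g → ∀ s t : S,
      IsLUB (Set.range f) s → IsLUB (Set.range g) t →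
      IsLUB (Set.range fun n => f n + g n) (s + t))
    (hbasis : ∃ B : Set S, B.Countable ∧ ∀ a : S, ∃ f : ℕ → S, Monotone f ∧
      (∀ n, f n ∈ B) ∧ IsLUB (Set.range f) a) :
    (∀ D : Set S, D.Nonempty → DirectedOn (· ≤ ·) D → ∃ s, IsLUB D s) ∧
    (∀ a b : S, NetWayBelow a b ↔ CuWayBelow a b) := by
  obtain ⟨B, hBc, hbas⟩ := hbasis
  constructor
  · intro D hne hdir
    obtain ⟨g, _, _, s, _, hsD⟩ := exists_chain_of_directed hO1 hBc hbas D hne hdir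
    exact ⟨s, hsD⟩
  · intro a b
    constructor
    · intro h f hf s hs hbs
      have hdir : DirectedOn (· ≤ ·) (Set.range f) := by
        rintro x ⟨m, rfl⟩ y ⟨n, rfl⟩
        exact ⟨f (max m n), Set.mem_range_self _, hf (le_max_left m n),
          hf (le_max_right m n)⟩
      obtain ⟨d, hd, had⟩ := h (Set.range f) ⟨f 0, Set.mem_range_self 0⟩ hdir s hs hbs
      obtain ⟨n, rfl⟩ := hd
      exact ⟨n, had⟩
    · intro h D hne hdir s hs hbs
      obtain ⟨g, hgm, hgD, t, hglub, htlub⟩ :=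
        exists_chain_of_directed hO1 hBc hbas D hne hdir
      have hts : t = s := htlub.unique hs
      obtain ⟨n, han⟩ := h g hgm t hglub (hts ▸ hbs)
      exact ⟨g n, hgD n, han⟩
end
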